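/- arXiv:1009.0788 — 2 statements merged into one kernel-verified Lean document; each statement's English description precedes it below -/
import Mathlib

section
/- A monomial x₁^{γ₁}···x_n^{γ_n} lies in the integral closure of the monomial ideal ⟨x₁^{a₁}, ..., x_n^{a_n}⟩ in K[x₁,...,x_n] if and only if there exist nonnegative rational numbers c₁,...,c_n with c₁+···+c_n = 1 and γ_i ≥ c_i·a_i for each i. -/
open MvPolynomial Pointwise

/-- `r` is integral over the ideal `I`: it satisfies an equation
`r^m + a₁ r^{m-1} + ⋯ + a_m = 0` with `aᵢ ∈ Iⁱ`. -/
def IsIntegralOverIdeal {R : Type*} [CommRing R] (I : Ideal R) (r : R) : Prop :=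
  ∃ m : ℕ, 0 < m ∧ ∃ a : ℕ → R, (∀ i, 1 ≤ i → i ≤ m → a i ∈ I ^ i) ∧
    r ^ m + ∑ i ∈ Finset.Icc 1 m, a i * r ^ (m - i) = 0

lemma prod_monomial_one {K : Type*} [Field K] {n : ℕ} {τ : Type} [Fintype τ]
    (s : Finset τ) (v : τ → (Fin n →₀ ℕ)) :
    ∏ t ∈ s, (monomial (v t) (1:K)) = monomial (∑ t ∈ s, v t) 1 := by
  classical
  induction s using Finset.induction_on with
  | empty => simp
  | @insert _ _ h ih => rw [Finset.prod_insert h, Finset.sum_insert h, ih, monomial_mul, one_mul]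

/-- Key membership lemma: coefficients of members of `I^i` dominate a sum of `i` generators. -/
lemma pow_mem_coeff {K : Type*} [Field K] {n : ℕ} (a : Fin n → ℕ) (i : ℕ)
    {p : MvPolynomial (Fin n) K}
    (hp : p ∈ (Ideal.span (Set.range fun j : Fin n => (X j : MvPolynomial (Fin n) K) ^ a j)) ^ i)
    {d : Fin n →₀ ℕ} (hd : coeff d p ≠ 0) :
    ∃ k : Fin n → ℕ, (∑ j, k j) = i ∧ ∀ j, k j * a j ≤ d j := by
  classical
  have himg : (Set.range fun j : Fin n => (X j : MvPolynomial (Fin n) K) ^ a j) ^ i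
      = (fun s => monomial s (1:K)) ''
        {v | ∃ f : Fin i → Fin n, v = ∑ t, Finsupp.single (f t) (a (f t))} := by
    ext x
    rw [Set.mem_pow]
    constructor
    · rintro ⟨f, hf⟩
      choose g hg using fun t => (f t).2
      refine ⟨∑ t, Finsupp.single (g t) (a (g t)), ⟨g, rfl⟩, ?_⟩
      beta_reduce
      rw [← prod_monomial_one, ← hf, List.prod_ofFn]
      refine Finset.prod_congr rfl fun t _ => ?_
      rw [← hg t]
      exact X_pow_eq_monomial.symm
    · rintro ⟨v, ⟨f, rfl⟩, rfl⟩
      refine ⟨fun t => ⟨(X (f t) : MvPolynomial (Fin n) K) ^ a (f t), ⟨f t, rfl⟩⟩, ?_⟩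
      beta_reduce
      rw [List.prod_ofFn, ← prod_monomial_one]
      exact Finset.prod_congr rfl fun t _ => X_pow_eq_monomial
  rw [Ideal.span, Submodule.span_pow, himg] at hp
  obtain ⟨v, ⟨f, rfl⟩, hle⟩ := mem_ideal_span_monomial_image.mp hp d (mem_support_iff.mpr hd)
  refine ⟨fun j => (Finset.univ.filter fun t => f t = j).card, ?_, fun j => ?_⟩
  · exact (Finset.card_eq_sum_card_fiberwise (fun t _ => Finset.mem_univ (f t))).symm.trans
      (by simp)
  · have := hle j
    rwa [Finsupp.finset_sum_apply, Finset.sum_congr rfl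
      (fun t _ => Finsupp.single_apply (a := f t) (a' := j) (b := a (f t))),
      ← Finset.sum_filter, Finset.sum_congr rfl
        (fun t ht => by rw [(Finset.mem_filter.mp ht).2]),
      Finset.sum_const, smul_eq_mul] at this

lemma prod_pow_mem_pow_sum' {R : Type*} [CommRing R] (I : Ideal R) {τ : Type} (s : Finset τ)
    (x : τ → R) (hx : ∀ j, x j ∈ I) (k : τ → ℕ) :
    ∏ j ∈ s, x j ^ k j ∈ I ^ (∑ j ∈ s, k j) := by
  classical
  induction s using Finset.induction_on with
  | empty => simp
  | @insert j s hj ih =>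
    rw [Finset.prod_insert hj, Finset.sum_insert hj, pow_add]
    exact Ideal.mul_mem_mul (Ideal.pow_mem_pow (hx j) _) ih

theorem monomial_mem_integral_closure_iff (K : Type*) [Field K] (n : ℕ)
    (a γ : Fin n → ℕ) (ha : ∀ i, 0 < a i) :
    IsIntegralOverIdeal
        (Ideal.span (Set.range fun i : Fin n => (MvPolynomial.X i : MvPolynomial (Fin n) K) ^ a i))
        (∏ i, (MvPolynomial.X i : MvPolynomial (Fin n) K) ^ γ i) ↔
      ∃ c : Fin n → ℚ, (∀ i, 0 ≤ c i) ∧ (∑ i, c i = 1) ∧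
        ∀ i, (γ i : ℚ) ≥ c i * a i := by
  classical
  set I : Ideal (MvPolynomial (Fin n) K) :=
    Ideal.span (Set.range fun i : Fin n => (X i : MvPolynomial (Fin n) K) ^ a i) with hI
  set r : MvPolynomial (Fin n) K := ∏ i, (X i : MvPolynomial (Fin n) K) ^ γ i with hr
  -- r ^ m is a monomial
  have hrm : ∀ m : ℕ, r ^ m
      = monomial (Finsupp.equivFunOnFinite.symm fun j => γ j * m) (1 : K) := by
    intro m
    rw [hr, ← Finset.prod_pow, Finsupp.equivFunOnFinite_symm_eq_sum, ← prod_monomial_one]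
    refine Finset.prod_congr rfl fun j _ => ?_
    rw [← pow_mul, X_pow_eq_monomial]
  constructor
  · rintro ⟨m, hm, A, hA, heq⟩
    have hsum : ∑ i ∈ Finset.Icc 1 m, coeff (Finsupp.equivFunOnFinite.symm fun j => γ j * m)
        (A i * r ^ (m - i)) = -1 := by
      have h1 : coeff (Finsupp.equivFunOnFinite.symm fun j => γ j * m) (r ^ m) = 1 := by
        rw [hrm m, coeff_monomial, if_pos rfl]
      have := congrArg (coeff (Finsupp.equivFunOnFinite.symm fun j => γ j * m)) heq
      rw [coeff_add, coeff_zero, h1, coeff_sum] at this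
      linear_combination this
    have hne : ∃ i ∈ Finset.Icc 1 m, coeff (Finsupp.equivFunOnFinite.symm fun j => γ j * m)
        (A i * r ^ (m - i)) ≠ 0 := by
      by_contra h
      push_neg at h
      rw [Finset.sum_eq_zero h] at hsum
      exact absurd hsum.symm (neg_ne_zero.mpr one_ne_zero)
    obtain ⟨i, hi, hci⟩ := hne
    rw [Finset.mem_Icc] at hi
    rw [hrm (m - i), coeff_mul_monomial'] at hci
    split_ifs at hci with hle
    · rw [mul_one] at hci
      have hdsub : (Finsupp.equivFunOnFinite.symm fun j => γ j * m)
          - (Finsupp.equivFunOnFinite.symm fun j => γ j * (m - i))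
          = Finsupp.equivFunOnFinite.symm fun j => γ j * i := by
        ext j
        simp only [Finsupp.coe_tsub, Pi.sub_apply, Finsupp.equivFunOnFinite_symm_apply_apply]
        rw [← Nat.mul_sub]
        congr 1
        omega
      rw [hdsub] at hci
      obtain ⟨k, hk, hka⟩ := pow_mem_coeff a i (hA i hi.1 hi.2) hci
      have hipos : (0:ℚ) < i := by exact_mod_cast hi.1
      refine ⟨fun j => (k j : ℚ) / i, fun j => by positivity, ?_, fun j => ?_⟩
      · rw [← Finset.sum_div, div_eq_one_iff_eq (ne_of_gt hipos)]
        exact_mod_cast hk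
      · rw [ge_iff_le, div_mul_eq_mul_div, div_le_iff₀ hipos]
        have := hka j
        simp only [Finsupp.equivFunOnFinite_symm_apply_apply] at this
        exact_mod_cast this
    · exact absurd rfl hci
  · rintro ⟨c, hc0, hc1, hcγ⟩
    set m : ℕ := ∏ j, (c j).den with hmdef
    have hmpos : 0 < m := Finset.prod_pos fun j _ => (c j).pos
    set t : Fin n → ℕ := fun j => m / (c j).den with htdef
    have ht : ∀ j, ((c j).den : ℕ) * t j = m := fun j =>
      Nat.mul_div_cancel' (Finset.dvd_prod_of_mem _ (Finset.mem_univ j)) 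
    set k : Fin n → ℕ := fun j => (c j).num.toNat * t j with hkdef
    have hk : ∀ j, (k j : ℚ) = c j * m := by
      intro j
      have hnum : (((c j).num.toNat : ℕ) : ℚ) = ((c j).num : ℚ) := by
        exact_mod_cast congrArg (fun z : ℤ => (z : ℚ))
          (Int.toNat_of_nonneg (Rat.num_nonneg.mpr (hc0 j)))
      rw [hkdef]
      push_cast
      rw [hnum, ← ht j]
      push_cast
      rw [← mul_assoc, Rat.mul_den_eq_num]
    have hksum : ∑ j, k j = m := by
      have : ((∑ j, k j : ℕ) : ℚ) = m := by
        push_cast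
        rw [Finset.sum_congr rfl fun j _ => hk j, ← Finset.sum_mul, hc1, one_mul]
      exact_mod_cast this
    have hkle : ∀ j, k j * a j ≤ γ j * m := by
      intro j
      have : (k j : ℚ) * a j ≤ γ j * m := by
        rw [hk j, mul_comm (c j) (m : ℚ), mul_assoc]
        have := mul_le_mul_of_nonneg_left (hcγ j) (le_of_lt (by exact_mod_cast hmpos : (0:ℚ) < m))
        linarith
      exact_mod_cast this
    have hrmmem : r ^ m ∈ I ^ m := by
      have hfact : r ^ m = (∏ j, ((X j : MvPolynomial (Fin n) K) ^ a j) ^ k j)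
          * ∏ j, (X j : MvPolynomial (Fin n) K) ^ (γ j * m - k j * a j) := by
        rw [hr, ← Finset.prod_pow, ← Finset.prod_mul_distrib]
        refine Finset.prod_congr rfl fun j _ => ?_
        rw [← pow_mul, ← pow_mul, ← pow_add]
        congr 1
        have h1 := hkle j
        have h2 : a j * k j = k j * a j := Nat.mul_comm _ _
        omega
      rw [hfact, ← hksum]
      exact Ideal.mul_mem_right _ _
        (prod_pow_mem_pow_sum' I Finset.univ _
          (fun j => Ideal.subset_span ⟨j, rfl⟩) k)
    refine ⟨m, hmpos, fun i => if i = m then -(r ^ m) else 0, fun i h1 h2 => ?_, ?_⟩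
    · beta_reduce
      split_ifs with h
      · subst h; exact neg_mem hrmmem
      · exact zero_mem _
    · rw [Finset.sum_eq_single_of_mem m (Finset.mem_Icc.mpr ⟨hmpos, le_refl m⟩)
        (fun i _ hne => by beta_reduce; rw [if_neg hne, zero_mul])]
      beta_reduce
      rw [if_pos rfl, Nat.sub_self, pow_zero, mul_one, add_neg_cancel]
end

section
/- For the ideal I = ⟨x^c, y^d⟩ ⊂ K[x,y] with c, d positive integers, for every l ≥ 1 and n ≥ 1, (I^l)^{n+1} : (I^l)^n = I^l. -/
open MvPolynomial Finsupp

section aux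
variable {K : Type*} [Field K]

lemma rr_span_pair_pow (a b : MvPolynomial (Fin 2) K) (l : ℕ) :
    (Ideal.span {a, b}) ^ l =
      Ideal.span ((fun p : ℕ × ℕ => a ^ p.1 * b ^ p.2) '' {p | p.1 + p.2 = l}) := by
  induction l with
  | zero =>
    rw [pow_zero, Ideal.one_eq_top]
    symm
    rw [Ideal.eq_top_iff_one]
    exact Ideal.subset_span ⟨(0, 0), by simp, by simp⟩
  | succ l ih =>
    rw [pow_succ, ih, Ideal.span_mul_span']
    congr 1
    ext x
    rw [Set.mem_mul]
    constructor
    · rintro ⟨u, ⟨⟨i, j⟩, hij, rfl⟩, v, hv, rfl⟩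
      simp only [Set.mem_insert_iff, Set.mem_singleton_iff] at hv
      rcases hv with rfl | rfl
      · exact ⟨(i + 1, j), by simp at hij ⊢; omega, by ring⟩
      · exact ⟨(i, j + 1), by simp at hij ⊢; omega, by ring⟩
    · rintro ⟨⟨i, j⟩, hij, rfl⟩
      simp only [Set.mem_setOf_eq] at hij
      cases i with
      | zero =>
        exact ⟨a ^ 0 * b ^ l, ⟨(0, l), by simp, rfl⟩, b,
          Set.mem_insert_of_mem _ rfl, by simp at hij; subst hij; ring⟩
      | succ i =>
        exact ⟨a ^ i * b ^ j, ⟨(i, j), by simp; omega, rfl⟩, a,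
          Set.mem_insert _ _, by ring⟩

lemma rr_pow_eq_monomial_span (c d : ℕ) (l : ℕ) :
    (Ideal.span {(X 0 : MvPolynomial (Fin 2) K) ^ c, (X 1 : MvPolynomial (Fin 2) K) ^ d}) ^ l =
      Ideal.span ((fun s => monomial s (1 : K)) ''
        ((fun p : ℕ × ℕ => single (0 : Fin 2) (p.1 * c) + single (1 : Fin 2) (p.2 * d)) ''
          {p | p.1 + p.2 = l})) := by
  rw [rr_span_pair_pow, Set.image_image]
  congr 1
  apply Set.image_congr'
  intro p
  rw [← pow_mul, ← pow_mul, X_pow_eq_monomial, X_pow_eq_monomial, monomial_mul, mul_one,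
    mul_comm c p.1, mul_comm d p.2]

end aux

theorem powers_of_xc_yd_ratliffRush (K : Type*) [Field K] (c d : ℕ)
    (hc : 0 < c) (hd : 0 < d) :
    ∀ l : ℕ, 1 ≤ l → ∀ n : ℕ, 1 ≤ n →
      (((Ideal.span {(MvPolynomial.X 0 : MvPolynomial (Fin 2) K) ^ c,
          (MvPolynomial.X 1 : MvPolynomial (Fin 2) K) ^ d}) ^ l) ^ (n + 1)).colon
        ((((Ideal.span {(MvPolynomial.X 0 : MvPolynomial (Fin 2) K) ^ c,
          (MvPolynomial.X 1 : MvPolynomial (Fin 2) K) ^ d}) ^ l) ^ n : Ideal (MvPolynomial (Fin 2) K)) :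
            Set (MvPolynomial (Fin 2) K))
      = (Ideal.span {(MvPolynomial.X 0 : MvPolynomial (Fin 2) K) ^ c,
          (MvPolynomial.X 1 : MvPolynomial (Fin 2) K) ^ d}) ^ l := by
  intro l hl n hn
  set I : Ideal (MvPolynomial (Fin 2) K) :=
    Ideal.span {(X 0 : MvPolynomial (Fin 2) K) ^ c, (X 1 : MvPolynomial (Fin 2) K) ^ d} with hI
  apply le_antisymm
  · intro f hf
    -- key: f * (X 0)^(c*(l*n)) ∈ I^(l*(n+1))
    have ha : ((X 0 : MvPolynomial (Fin 2) K) ^ c) ∈ I := Ideal.subset_span (Set.mem_insert _ _)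
    have haln : ((X 0 : MvPolynomial (Fin 2) K) ^ c) ^ (l * n) ∈ (I ^ l) ^ n := by
      rw [pow_mul]
      exact Ideal.pow_mem_pow (Ideal.pow_mem_pow ha l) n
    have hmem : f * ((X 0 : MvPolynomial (Fin 2) K) ^ c) ^ (l * n) ∈ (I ^ l) ^ (n + 1) :=
      Submodule.mem_colon.mp hf _ haln
    rw [← pow_mul] at hmem
    rw [rr_pow_eq_monomial_span] at hmem
    rw [rr_pow_eq_monomial_span]
    rw [mem_ideal_span_monomial_image] at hmem ⊢
    intro m hm
    -- the support of f * monomial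
    have hXpow : ((X 0 : MvPolynomial (Fin 2) K) ^ c) ^ (l * n)
        = monomial (single (0 : Fin 2) (c * (l * n))) (1 : K) := by
      rw [← pow_mul, X_pow_eq_monomial]
    have hsupp : (f * ((X 0 : MvPolynomial (Fin 2) K) ^ c) ^ (l * n)).support
        = f.support.map (addRightEmbedding (single (0 : Fin 2) (c * (l * n)))) := by
      rw [hXpow]
      exact AddMonoidAlgebra.support_coeff_mul_single f 1 (by simp) _
    have hm' : m + single (0 : Fin 2) (c * (l * n))
        ∈ (f * ((X 0 : MvPolynomial (Fin 2) K) ^ c) ^ (l * n)).support := by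
      rw [hsupp, Finset.mem_map]
      exact ⟨m, hm, rfl⟩
    obtain ⟨s, ⟨⟨i, j⟩, hij, rfl⟩, hle⟩ := hmem _ hm'
    simp only [Set.mem_setOf_eq] at hij
    have h0 : i * c ≤ m 0 + c * (l * n) := by
      have := (Finsupp.le_def.mp hle) 0
      simpa using this
    have h1 : j * d ≤ m 1 := by
      have := (Finsupp.le_def.mp hle) 1
      simpa using this
    have hmul : l * (n + 1) = l * n + l := Nat.mul_succ l n
    by_cases hi : i ≤ l * n
    · refine ⟨single (0 : Fin 2) (0 * c) + single (1 : Fin 2) (l * d),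
        ⟨(0, l), by simp, rfl⟩, ?_⟩
      rw [Finsupp.le_def]
      intro k
      fin_cases k
      · simp
      · have hjl : l ≤ j := by omega
        have hld : l * d ≤ j * d := Nat.mul_le_mul_right d hjl
        simp
        omega
    · push_neg at hi
      refine ⟨single (0 : Fin 2) ((i - l * n) * c) + single (1 : Fin 2) (j * d),
        ⟨(i - l * n, j), by simp; omega, rfl⟩, ?_⟩
      rw [Finsupp.le_def]
      intro k
      have hkey : (i - l * n) * c + (l * n) * c = i * c := by
        rw [← Nat.add_mul, Nat.sub_add_cancel hi.le]
      have hcln : c * (l * n) = (l * n) * c := Nat.mul_comm _ _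
      fin_cases k
      · simp
        omega
      · simp
        omega
  · intro f hf
    rw [Submodule.mem_colon]
    intro p hp
    rw [smul_eq_mul, pow_succ']
    exact Ideal.mul_mem_mul hf hp
end
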